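/- Let R̂ = ℂ[[x,y]] and let I ⊆ J be ideals of R̂ with dim_ℂ(R̂/J) = n and dim_ℂ(R̂/I) = n+2, so that dim_ℂ(J/I) = 2. Then: (i) if x·J ⊆ I and y·J ⊆ I, then every ℂ-linear subspace V with I ⊆ V ⊆ J and dim_ℂ(V/I) = 1 is an ideal of R̂; (ii) if x·J ⊈ I or y·J ⊈ I, then there exists exactly one ideal V of R̂ with I ⊆ V ⊆ J and dim_ℂ(J/V) = 1. -/

import Mathlib

/-!
Let 𝔪 = (x, y). Every series is a constant plus an element of 𝔪, so when 𝔪J ⊆ I the ring acts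
on J/I through ℂ and every ℂ-subspace between I and J is an ideal. When 𝔪J ⊄ I, the ideal
W = I + 𝔪J differs from I by assumption and from J by Nakayama, so it has codimension one in the
two-dimensional J/I. Conversely, if V has codimension one in J, then V + 𝔪J ≠ J by Nakayama,
so V + 𝔪J = V; hence W ⊆ V, and equal codimensions force V = W.
-/

/-- `R̂ = ℂ[[x,y]]`. -/
abbrev Rhat : Type := MvPowerSeries (Fin 2) ℂ

/-- `x·J ⊆ I` and `y·J ⊆ I`, i.e. `J/I` is a trivial `ℂ[[x,y]]`-module. -/
def TriviallyRelated (I J : Ideal Rhat) : Prop :=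
  ∀ f ∈ J, MvPowerSeries.X (0 : Fin 2) * f ∈ I ∧ MvPowerSeries.X (1 : Fin 2) * f ∈ I

theorem Cardinal.exists_natCast_of_add_eq_natCast {a b : Cardinal} {k : ℕ} (h : a + b = k) :
    ∃ i j : ℕ, a = i ∧ b = j ∧ i + j = k := by
  obtain ⟨i, -, rfl⟩ := exists_nat_eq_of_le_nat (h ▸ le_self_add)
  obtain ⟨j, -, rfl⟩ := exists_nat_eq_of_le_nat (h ▸ le_add_self)
  exact ⟨i, j, rfl, rfl, by exact_mod_cast h⟩

namespace Submodule

variable {K M : Type*} [DivisionRing K] [AddCommGroup M] [Module K M]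

theorem rank_subquotient_eq_zero_iff {A B : Submodule K M} :
    Module.rank K (B ⧸ A.comap B.subtype) = 0 ↔ B ≤ A := by
  rw [rank_zero_iff, Quotient.subsingleton_iff, comap_subtype_eq_top]

noncomputable def subquotientEquivMap (A B : Submodule K M) :
    (B ⧸ A.comap B.subtype) ≃ₗ[K] B.map A.mkQ :=
  (quotEquivOfEq _ _ (by rw [LinearMap.ker_comp, ker_mkQ])).trans
    ((A.mkQ ∘ₗ B.subtype).quotKerEquivRange.trans
      (LinearEquiv.ofEq _ _ (by rw [LinearMap.range_comp, range_subtype])))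

theorem rank_quotient_eq_add_rank_subquotient {A B : Submodule K M} (h : A ≤ B) :
    Module.rank K (M ⧸ A) =
      Module.rank K (M ⧸ B) + Module.rank K (B ⧸ A.comap B.subtype) := by
  rw [← rank_quotient_add_rank (B.map A.mkQ), (quotientQuotientEquivQuotient A B h).rank_eq,
    (subquotientEquivMap A B).rank_eq]

theorem rank_subquotient_eq_add {A B C : Submodule K M} (hAB : A ≤ B) (hBC : B ≤ C) :
    Module.rank K (C ⧸ A.comap C.subtype) =
      Module.rank K (C ⧸ B.comap C.subtype) + Module.rank K (B ⧸ A.comap B.subtype) := by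
  rw [rank_quotient_eq_add_rank_subquotient (comap_mono hAB)]
  congr 1
  refine (Quotient.equiv _ _ (comapSubtypeEquivOfLe hBC) ?_).rank_eq
  ext ⟨x, hx⟩
  simp only [mem_map, mem_comap, comapSubtypeEquivOfLe, Subtype.exists, coe_subtype,
    LinearMap.coe_mk, AddHom.coe_mk]
  constructor
  · rintro ⟨a, _, _, ha, hax⟩
    rwa [← Subtype.mk.inj hax]
  · exact fun h => ⟨x, hBC hx, hx, h, rfl⟩

end Submodule

namespace Ideal

variable {K R : Type*} [Field K] [CommRing R] [Algebra K R]

variable (K) in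
/-- `codim K V J = dim_K (J / V)`. -/
noncomputable abbrev codim (V J : Ideal R) : Cardinal :=
  Module.rank K (J.restrictScalars K ⧸ (V.restrictScalars K).comap (J.restrictScalars K).subtype)

theorem exists_restrictScalars_eq_of_mul_le {m I J : Ideal R}
    (hm : ∀ r : R, ∃ c : K, r - algebraMap K R c ∈ m) (hmJ : m * J ≤ I) {V : Submodule K R}
    (hIV : I.restrictScalars K ≤ V) (hVJ : V ≤ J.restrictScalars K) :
    ∃ W : Ideal R, W.restrictScalars K = V := by
  refine ⟨{ V.toAddSubmonoid with smul_mem' := fun r v hv => ?_ }, rfl⟩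
  obtain ⟨c, hc⟩ := hm r
  have hr : r • v = c • v + (r - algebraMap K R c) * v := by
    rw [smul_eq_mul, Algebra.smul_def c v]; ring
  rw [hr]
  exact V.add_mem (V.smul_mem c hv) (hIV (hmJ (mul_mem_mul hc (hVJ hv))))

theorem rank_quotient_eq_add_codim {I J : Ideal R} (h : I ≤ J) :
    Module.rank K (R ⧸ I) = Module.rank K (R ⧸ J) + codim K I J := by
  rw [← (Submodule.Quotient.restrictScalarsEquiv K I).rank_eq,
    ← (Submodule.Quotient.restrictScalarsEquiv K J).rank_eq]
  exact Submodule.rank_quotient_eq_add_rank_subquotient (Submodule.restrictScalars_mono K h)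

theorem codim_eq_zero_iff {V J : Ideal R} : codim K V J = 0 ↔ J ≤ V := by
  rw [codim, Submodule.rank_subquotient_eq_zero_iff, Submodule.restrictScalars_le]

theorem codim_eq_add {U V J : Ideal R} (hUV : U ≤ V) (hVJ : V ≤ J) :
    codim K U J = codim K V J + codim K U V :=
  Submodule.rank_subquotient_eq_add (Submodule.restrictScalars_mono K hUV)
    (Submodule.restrictScalars_mono K hVJ)

theorem codim_sup_mul_ne_zero {m V J : Ideal R} (hm : m ≤ jacobson ⊥) (hJ : J.FG)
    (hJV : ¬ J ≤ V) : codim K (V ⊔ m * J) J ≠ 0 := by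
  rw [Ne, codim_eq_zero_iff]
  exact fun h => hJV (Submodule.le_of_le_smul_of_le_jacobson_bot hJ hm h)

theorem mul_le_of_codim_eq_one {m V J : Ideal R} (hm : m ≤ jacobson ⊥) (hJ : J.FG)
    (hVJ : V ≤ J) (h : codim K V J = 1) : m * J ≤ V := by
  have hJV : ¬ J ≤ V := by rw [← codim_eq_zero_iff (K := K), h]; exact one_ne_zero
  obtain ⟨i, j, hi, hj, hij⟩ := Cardinal.exists_natCast_of_add_eq_natCast (k := 1) <| by
    rw [← codim_eq_add (K := K) le_sup_left (sup_le hVJ (mul_le_right (I := m))), h,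
      Nat.cast_one]
  have hi0 := codim_sup_mul_ne_zero (K := K) hm hJ hJV
  rw [hi, Nat.cast_ne_zero] at hi0
  rw [show j = 0 by omega, Nat.cast_zero, codim_eq_zero_iff] at hj
  exact le_sup_right.trans hj

theorem codim_sup_mul_eq_one {m I J : Ideal R} (hm : m ≤ jacobson ⊥) (hJ : J.FG) (hIJ : I ≤ J)
    (h2 : codim K I J = 2) (hmJ : ¬ m * J ≤ I) : codim K (I ⊔ m * J) J = 1 := by
  have hJI : ¬ J ≤ I := by rw [← codim_eq_zero_iff (K := K), h2]; exact two_ne_zero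
  obtain ⟨i, j, hi, hj, hij⟩ := Cardinal.exists_natCast_of_add_eq_natCast (k := 2) <| by
    rw [← codim_eq_add (K := K) le_sup_left (sup_le hIJ (mul_le_right (I := m))), h2,
      Nat.cast_ofNat]
  have hi0 := codim_sup_mul_ne_zero (K := K) hm hJ hJI
  rw [hi, Nat.cast_ne_zero] at hi0
  have hj0 : j ≠ 0 := by
    rintro rfl
    rw [Nat.cast_zero, codim_eq_zero_iff] at hj
    exact hmJ (le_sup_right.trans hj)
  rw [hi, show i = 1 by omega, Nat.cast_one]

theorem existsUnique_codim_eq_one {m I J : Ideal R} (hm : m ≤ jacobson ⊥) (hJ : J.FG)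
    (hIJ : I ≤ J) (h2 : codim K I J = 2) (hmJ : ¬ m * J ≤ I) :
    ∃! V : Ideal R, I ≤ V ∧ V ≤ J ∧ codim K V J = 1 := by
  have hW := codim_sup_mul_eq_one hm hJ hIJ h2 hmJ
  refine ⟨I ⊔ m * J, ⟨le_sup_left, sup_le hIJ mul_le_right, hW⟩, ?_⟩
  rintro V ⟨hIV, hVJ, hV⟩
  have hWV : I ⊔ m * J ≤ V := sup_le hIV (mul_le_of_codim_eq_one hm hJ hVJ hV)
  obtain ⟨i, j, hi, hj, hij⟩ := Cardinal.exists_natCast_of_add_eq_natCast (k := 1) <| by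
    rw [← codim_eq_add (K := K) hWV hVJ, hW, Nat.cast_one]
  rw [hV, ← Nat.cast_one, Nat.cast_inj] at hi
  rw [show j = 0 by omega, Nat.cast_zero, codim_eq_zero_iff] at hj
  exact le_antisymm hj hWV

end Ideal

open MvPowerSeries

theorem MvPowerSeries.X_mem_jacobson_bot {σ R : Type*} [CommRing R] (i : σ) :
    (X i : MvPowerSeries σ R) ∈ Ideal.jacobson ⊥ :=
  Ideal.mem_jacobson_bot.2 fun y => isUnit_iff_constantCoeff.2 (by simp)

theorem MvPowerSeries.sub_C_constantCoeff_mem_span_X {R : Type*} [CommRing R]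
    (f : MvPowerSeries (Fin 2) R) : f - C (constantCoeff f) ∈ Ideal.span {X 0, X 1} := by
  classical
  set p : MvPowerSeries (Fin 2) R := fun m => if m 0 = 0 then 0 else coeff m f
  obtain ⟨g, hg⟩ : X 0 ∣ p := X_dvd_iff.2 fun m hm => if_pos hm
  obtain ⟨h, hh⟩ : X 1 ∣ f - C (constantCoeff f) - p := X_dvd_iff.2 fun m hm => by
    rw [map_sub, map_sub, coeff_C]
    change _ - _ - (if m 0 = 0 then 0 else coeff m f) = 0
    by_cases h0 : m 0 = 0
    · obtain rfl : m = 0 := Finsupp.ext (Fin.forall_fin_two.2 ⟨h0, hm⟩)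
      simp
    · have hm0 : m ≠ 0 := by rintro rfl; exact h0 rfl
      simp [h0, hm0]
  exact Ideal.mem_span_pair.2 ⟨g, h, by rw [mul_comm g, mul_comm h, ← hg, ← hh]; ring⟩

theorem triviallyRelated_iff {I J : Ideal Rhat} :
    TriviallyRelated I J ↔ Ideal.span {X 0, X 1} * J ≤ I := by
  refine ⟨fun h => Ideal.mul_le.2 fun r hr f hf => ?_, fun h f hf => ?_⟩
  · obtain ⟨a, b, rfl⟩ := Ideal.mem_span_pair.1 hr
    rw [add_mul, mul_assoc, mul_assoc]
    exact I.add_mem (I.mul_mem_left a (h f hf).1) (I.mul_mem_left b (h f hf).2)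
  · exact ⟨h (Ideal.mul_mem_mul (Ideal.subset_span (by simp)) hf),
      h (Ideal.mul_mem_mul (Ideal.subset_span (by simp)) hf)⟩

theorem statement15 (n : ℕ) (I J : Ideal Rhat) (hIJ : I ≤ J)
    (hJ : Module.rank ℂ (Rhat ⧸ J) = (n : Cardinal))
    (hI : Module.rank ℂ (Rhat ⧸ I) = ((n + 2 : ℕ) : Cardinal)) :
    (TriviallyRelated I J →
      ∀ V : Submodule ℂ Rhat,
        Submodule.restrictScalars ℂ I ≤ V → V ≤ Submodule.restrictScalars ℂ J →
        Module.rank ℂ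
            (↥V ⧸ Submodule.comap V.subtype (Submodule.restrictScalars ℂ I)) = 1 →
        ∃ W : Ideal Rhat, Submodule.restrictScalars ℂ W = V) ∧
    (¬ TriviallyRelated I J →
      ∃! V : Ideal Rhat, I ≤ V ∧ V ≤ J ∧
        Module.rank ℂ
            (↥(Submodule.restrictScalars ℂ J) ⧸
              Submodule.comap (Submodule.restrictScalars ℂ J).subtype
                (Submodule.restrictScalars ℂ V)) = 1) := by
  have hres (r : Rhat) : ∃ c : ℂ, r - algebraMap ℂ Rhat c ∈ Ideal.span {X 0, X 1} :=
    ⟨constantCoeff r, by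
      simpa [MvPowerSeries.algebraMap_apply] using sub_C_constantCoeff_mem_span_X r⟩
  refine ⟨fun htriv V hIV hVJ _ => Ideal.exists_restrictScalars_eq_of_mul_le hres
    (triviallyRelated_iff.1 htriv) hIV hVJ, fun hnt => ?_⟩
  have hjac : Ideal.span {X 0, X 1} ≤ Ideal.jacobson (⊥ : Ideal Rhat) := by
    rw [Ideal.span_le, Set.insert_subset_iff, Set.singleton_subset_iff]
    exact ⟨X_mem_jacobson_bot 0, X_mem_jacobson_bot 1⟩
  have h2 : Ideal.codim ℂ I J = 2 := by
    have h := Ideal.rank_quotient_eq_add_codim (K := ℂ) hIJ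
    rw [hI, hJ] at h
    obtain ⟨i, j, hi, hj, hij⟩ := Cardinal.exists_natCast_of_add_eq_natCast h.symm
    rw [Nat.cast_inj] at hi
    rw [hj, show j = 2 by omega, Nat.cast_ofNat]
  exact Ideal.existsUnique_codim_eq_one hjac (IsNoetherian.noetherian J) hIJ h2
    (mt triviallyRelated_iff.2 hnt)
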